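/- arXiv:1211.5326 — 2 statements merged into one kernel-verified Lean document; each statement's English description precedes it below -/
import Mathlib

section
/- If φ is a non-monochromatic coloring of a Type 7 cycle that is a constant 2-labelling with constants a and b, then either (i) φ is 1-antiperiodic (alternate), a = (p/2−1)y + z and b = (p/2−1)x + t, or (ii) φ is (p/2)-periodic and there exists a natural number α with 0 ≤ α ≤ p/2−1 such that a = α(x+y) + t + z and b = (α+1)(x+y). -/
/-!
Write `π` for the parity map `ZMod p → ZMod 2` and `h = p/2`, which is odd as `p ≡ 2 (mod 4)`.
The Type 7 weight is `x` on odd and `y` on even vertices, corrected at `0` and `h`, so the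
label of `k` is `x N(π k + 1) + y N(π k) + [φ k] (z - y) + [φ (k + h)] (t - x)`, where `N j`
counts the black vertices of parity `j`. As `x ≠ t`, the colour of `k + h` depends only on the
parity and the colour of `k`, which forces `φ` to be `h`-periodic or `h`-antiperiodic. In the
periodic case both colours meet both parity classes, and `x ≠ y` gives `N 0 = N 1`. In the
antiperiodic case half of the vertices are black; a parity class meeting both colours would
again give `N 0 = N 1` and make `p/2` even, so `φ` is constant on parity classes: alternating.
-/

open Finset

lemma eq_of_mul_add_mul_swap {x y m n : ℝ} (hxy : x ≠ y)
    (h : x * m + y * n = x * n + y * m) : m = n := by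
  have : (x - y) * (m - n) = 0 := by linear_combination h
  linarith [(mul_eq_zero.mp this).resolve_left (sub_ne_zero.mpr hxy)]

section ParityWeight

variable {G : Type*} [AddCommGroup G] (π : G →+ ZMod 2)

lemma shift_ne_of_antiperiodic {φ : G → Bool} {h g : G} (hπh : π h = 1) (hg : π g = 1)
    (hanti : ∀ k, φ (k + h) ≠ φ k) (hconst : ∀ k k', π k = π k' → φ k = φ k') :
    ∀ i, φ (i + g) ≠ φ i := by
  intro i
  rw [hconst (i + g) (i + h) (by rw [map_add, map_add, hg, hπh])]
  exact hanti i

variable [DecidableEq G] (h : G)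

def parityWeight (x y z t : ℝ) (d : G) : ℝ :=
  (if π d = 1 then x else y) + (if d = 0 then z - y else 0) + (if d = h then t - x else 0)

lemma eq_parityWeight {w : G → ℝ} {x y z t : ℝ} (hπh : π h = 1) (hw0 : w 0 = z)
    (hwh : w h = t) (hw : ∀ d, d ≠ 0 → d ≠ h → w d = if π d = 1 then x else y) :
    w = parityWeight π h x y z t := by
  have h0 : (0 : G) ≠ h := fun e => by simp [← e] at hπh
  funext d
  by_cases hd0 : d = 0
  · subst hd0; simp [parityWeight, hw0, h0]
  by_cases hdh : d = h
  · subst hdh; simp [parityWeight, hwh, hπh, h0.symm]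
  · simp [parityWeight, hw d hd0 hdh, hd0, hdh]

end ParityWeight

section Labelling

variable {G : Type*} [AddCommGroup G] [Fintype G]

def labelSum (w : G → ℝ) (φ : G → Bool) (k : G) : ℝ :=
  ∑ u, if φ (u + k) then w u else 0

def IsConstantTwoLabelling (w : G → ℝ) (φ : G → Bool) (a b : ℝ) : Prop :=
  ∀ k, labelSum w φ k = if φ k then a else b

lemma labelSum_eq_sum_filter (w : G → ℝ) (φ : G → Bool) (k : G) :
    labelSum w φ k = ∑ v with φ v, w (v - k) := by
  rw [labelSum, sum_filter]
  exact Fintype.sum_equiv (Equiv.addRight k) _ _ (fun u => by simp)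

variable (π : G →+ ZMod 2)

def blackCount (φ : G → Bool) (j : ZMod 2) : ℕ := #{v | φ v ∧ π v = j}

lemma blackCount_add_blackCount_add_one (φ : G → Bool) (j : ZMod 2) :
    blackCount π φ j + blackCount π φ (j + 1) = #{v | φ v} := by
  have hne : ∀ v, π v = j + 1 ↔ ¬ π v = j := by
    intro v; generalize π v = i; revert i j; decide
  simp only [blackCount, ← filter_filter, hne]
  exact card_filter_add_card_filter_not _

lemma two_mul_card_filter_of_antiperiodic {φ : G → Bool} {h : G}
    (hanti : ∀ k, φ (k + h) ≠ φ k) : 2 * #{v | φ v} = Fintype.card G := by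
  have hshift : #{v | φ (v + h)} = #{v | φ v} := by
    simp only [card_filter]
    exact Fintype.sum_equiv (Equiv.addRight h) _ _ (fun _ => rfl)
  have hswap : ∀ v, φ (v + h) = true ↔ ¬ φ v = true := by
    intro v; have := hanti v; revert this; cases φ (v + h) <;> cases φ v <;> decide
  simp only [hswap] at hshift
  rw [← card_univ, ← card_filter_add_card_filter_not (s := univ) (fun v => φ v = true), hshift]
  ring

variable [DecidableEq G] (h : G)

lemma labelSum_parityWeight (x y z t : ℝ) (φ : G → Bool) (k : G) :
    labelSum (parityWeight π h x y z t) φ k =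
      x * blackCount π φ (π k + 1) + y * blackCount π φ (π k)
        + (if φ k then z - y else 0) + (if φ (k + h) then t - x else 0) := by
  have hpar : ∀ v, π (v - k) = 1 ↔ π v = π k + 1 := by
    intro v; rw [map_sub]; generalize π v = i; generalize π k = j; revert i j; decide
  have hnpar : ∀ v, ¬ π v = π k + 1 ↔ π v = π k := by
    intro v; generalize π v = i; generalize π k = j; revert i j; decide
  rw [labelSum_eq_sum_filter]
  simp only [parityWeight, sum_add_distrib, sub_eq_iff_eq_add', add_zero, sum_ite_eq',
    mem_filter_univ, hpar]
  simp only [sum_ite, sum_const, nsmul_eq_mul, filter_filter, hnpar, blackCount]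
  split_ifs <;> ring

namespace IsConstantTwoLabelling

variable {π h} {x y z t a b : ℝ} {φ : G → Bool}

lemma eq_blackCount (hφ : IsConstantTwoLabelling (parityWeight π h x y z t) φ a b) (k : G) :
    (if φ k then a else b) =
      x * blackCount π φ (π k + 1) + y * blackCount π φ (π k)
        + (if φ k then z - y else 0) + (if φ (k + h) then t - x else 0) := by
  rw [← hφ k, labelSum_parityWeight]

/-- The labels of `k` and `k'` can only differ in the term `[φ (· + h)] (t - x)`. -/
lemma shift_eq_of_parity_eq (hφ : IsConstantTwoLabelling (parityWeight π h x y z t) φ a b)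
    (hxt : x ≠ t) {k k' : G} (hπ : π k = π k') (hc : φ k = φ k') :
    φ (k + h) = φ (k' + h) := by
  have hk := hφ.eq_blackCount k
  have hk' := hφ.eq_blackCount k'
  rw [hπ, hc] at hk
  have hshift : (if φ (k + h) then t - x else 0) = if φ (k' + h) then t - x else 0 := by
    linarith
  have hxt' : t - x ≠ 0 := sub_ne_zero.mpr hxt.symm
  revert hshift
  cases φ (k + h) <;> cases φ (k' + h) <;> simp [hxt', hxt'.symm]

lemma periodic_or_antiperiodic (hφ : IsConstantTwoLabelling (parityWeight π h x y z t) φ a b)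
    (hxt : x ≠ t) (hπh : π h = 1) (hhh : h + h = 0) :
    (∀ k, φ (k + h) = φ k) ∨ ∀ k, φ (k + h) ≠ φ k := by
  have hshift2 : ∀ k, k + h + h = k := fun k => by rw [add_assoc, hhh, add_zero]
  have hclass : ∀ k k', π k = π k' → φ (k + h) = φ k → φ (k' + h) = φ k' := by
    intro k k' hπ hk
    by_cases hc : φ k = φ k'
    · rw [← hφ.shift_eq_of_parity_eq hxt hπ hc, hk, hc]
    · by_contra hk'
      have hπh' : π (k' + h) = π (k + h) := by rw [map_add, map_add, hπ]
      have hφh : φ (k' + h) = φ (k + h) := by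
        revert hk hk' hc; cases φ k <;> cases φ k' <;> cases φ (k + h) <;> cases φ (k' + h) <;>
          decide
      have := hφ.shift_eq_of_parity_eq hxt hπh' hφh
      rw [hshift2, hshift2] at this
      exact hc this.symm
  by_cases hper : ∃ k₀, φ (k₀ + h) = φ k₀
  · obtain ⟨k₀, hk₀⟩ := hper
    have hk₀h : φ (k₀ + h + h) = φ (k₀ + h) := by rw [hshift2, hk₀]
    left
    intro k
    by_cases hπ : π k₀ = π k
    · exact hclass k₀ k hπ hk₀
    · refine hclass (k₀ + h) k ?_ hk₀h
      rw [map_add, hπh]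
      revert hπ; generalize π k₀ = i; generalize π k = j; revert i j; decide
  · exact Or.inr (not_exists.mp hper)

lemma values_of_periodic (hφ : IsConstantTwoLabelling (parityWeight π h x y z t) φ a b)
    (hxy : x ≠ y) (hπh : π h = 1) (hper : ∀ k, φ (k + h) = φ k)
    (hnontriv : ∃ i j, φ i ≠ φ j) :
    ∃ α : ℕ, 2 * (α + 1) < Fintype.card G ∧
      a = α * (x + y) + t + z ∧ b = (α + 1) * (x + y) := by
  have hcolor : ∀ c j, ∃ k, φ k = c ∧ π k = j := by
    intro c j
    obtain ⟨k, hk⟩ : ∃ k, φ k = c := by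
      obtain ⟨i₁, i₂, hi⟩ := hnontriv
      by_cases h₁ : φ i₁ = c
      · exact ⟨i₁, h₁⟩
      · exact ⟨i₂, by revert hi h₁; cases φ i₁ <;> cases φ i₂ <;> cases c <;> decide⟩
    by_cases hkj : π k = j
    · exact ⟨k, hk, hkj⟩
    · refine ⟨k + h, by rw [hper, hk], ?_⟩
      rw [map_add, hπh]
      revert hkj; generalize π k = i; revert i j; decide
  obtain ⟨k₀, hk₀, hπk₀⟩ := hcolor false 0
  obtain ⟨k₁, hk₁, hπk₁⟩ := hcolor false 1
  obtain ⟨kb, hkb, hπkb⟩ := hcolor true 0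
  have e₀ := hφ.eq_blackCount k₀
  have e₁ := hφ.eq_blackCount k₁
  have eb := hφ.eq_blackCount kb
  simp only [hper, hk₀, hk₁, hkb, hπk₀, hπk₁, hπkb, zero_add,
    (by decide : (1 + 1 : ZMod 2) = 0), Bool.false_eq_true, if_true, if_false, add_zero]
    at e₀ e₁ eb
  have hN : (blackCount π φ 1 : ℝ) = blackCount π φ 0 :=
    eq_of_mul_add_mul_swap hxy (e₀.symm.trans e₁)
  obtain ⟨α, hα⟩ : ∃ α, blackCount π φ 0 = α + 1 :=
    Nat.exists_eq_add_one.mpr (card_pos.mpr ⟨kb, by simp [hkb, hπkb]⟩)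
  have hcard : #{v | φ v} < Fintype.card G := card_lt_univ_of_notMem (x := k₀) (by simp [hk₀])
  rw [← blackCount_add_blackCount_add_one π φ 0, zero_add, Nat.cast_inj.mp hN, hα] at hcard
  rw [hN, hα] at e₀ eb
  push_cast at e₀ eb
  exact ⟨α, by omega, by linear_combination eb, by linear_combination e₀⟩

lemma parity_const_of_antiperiodic (hφ : IsConstantTwoLabelling (parityWeight π h x y z t) φ a b)
    (hxy : x ≠ y) (hπh : π h = 1) (hhh : h + h = 0) (h4 : ¬ 4 ∣ Fintype.card G)
    (hanti : ∀ k, φ (k + h) ≠ φ k) : ∀ k k', π k = π k' → φ k = φ k' := by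
  -- comparing the white vertices `kw` and `kb + h` gives `N (j + 1) = N j`
  have hmixed : ∀ kb kw, φ kb = true → φ kw = false → π kb = π kw → False := by
    intro kb kw hkb hkw hπ
    have hkbh : φ (kb + h) = false := by simpa [hkb] using hanti kb
    have hkwh : φ (kw + h) = true := by simpa [hkw] using hanti kw
    have ew := hφ.eq_blackCount kw
    have eb := hφ.eq_blackCount (kb + h)
    rw [add_assoc kb, hhh, add_zero, map_add, hπh, hπ,
      (by decide : ∀ j : ZMod 2, j + 1 + 1 = j)] at eb
    simp only [hkw, hkwh, hkbh, hkb, Bool.false_eq_true, if_true, if_false, add_zero] at ew eb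
    have hN : (blackCount π φ (π kw + 1) : ℝ) = blackCount π φ (π kw) :=
      eq_of_mul_add_mul_swap hxy (by linarith)
    have hcard := two_mul_card_filter_of_antiperiodic hanti
    rw [← blackCount_add_blackCount_add_one π φ (π kw), Nat.cast_inj.mp hN] at hcard
    exact h4 ⟨blackCount π φ (π kw), by omega⟩
  intro k k' hπ
  cases hk : φ k <;> cases hk' : φ k'
  · rfl
  · exact (hmixed k' k hk' hk hπ.symm).elim
  · exact (hmixed k k' hk hk' hπ).elim
  · rfl

lemma values_of_antiperiodic (hφ : IsConstantTwoLabelling (parityWeight π h x y z t) φ a b)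
    (hπh : π h = 1) (hhh : h + h = 0) (hanti : ∀ k, φ (k + h) ≠ φ k)
    (hconst : ∀ k k', π k = π k' → φ k = φ k') :
    a = ((Fintype.card G / 2 : ℕ) - 1 : ℝ) * y + z ∧
      b = ((Fintype.card G / 2 : ℕ) - 1 : ℝ) * x + t := by
  obtain ⟨kb, hkb⟩ : ∃ kb, φ kb = true := by
    by_cases h0 : φ 0 = true
    · exact ⟨0, h0⟩
    · exact ⟨0 + h, by simpa [h0] using hanti 0⟩
  have hkbh : φ (kb + h) = false := by simpa [hkb] using hanti kb
  have hwhite : blackCount π φ (π kb + 1) = 0 := by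
    rw [blackCount, card_eq_zero, filter_eq_empty_iff]
    rintro v - ⟨hv, hπv⟩
    have := hconst v (kb + h) (by rw [map_add, hπh, hπv])
    rw [hv, hkbh] at this
    exact Bool.noConfusion this
  have hblack : blackCount π φ (π kb) = Fintype.card G / 2 := by
    have := two_mul_card_filter_of_antiperiodic hanti
    have := blackCount_add_blackCount_add_one π φ (π kb)
    omega
  have ea := hφ.eq_blackCount kb
  have eb := hφ.eq_blackCount (kb + h)
  rw [add_assoc kb, hhh, add_zero, map_add, hπh, (by decide : ∀ j : ZMod 2, j + 1 + 1 = j)] at eb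
  simp only [hkb, hkbh, hwhite, hblack, Bool.false_eq_true, if_true, if_false, add_zero,
    Nat.cast_zero, mul_zero, zero_add] at ea eb
  exact ⟨by linear_combination ea, by linear_combination eb⟩

end IsConstantTwoLabelling

end Labelling

lemma type7_weight_eq_of_ne {p : ℕ} [NeZero p] (hp : 2 ∣ p) {w : ZMod p → ℝ} {x y : ℝ}
    (hwx : ∀ i : ℕ, 1 ≤ i → i < p / 2 → Odd i → w (i : ZMod p) = x)
    (hwy : ∀ i : ℕ, 1 ≤ i → i < p / 2 → Even i → w (i : ZMod p) = y)
    (hwsym : ∀ i : ℕ, 1 ≤ i → i < p / 2 → w (((p - i : ℕ) : ZMod p)) = w (i : ZMod p))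
    (d : ZMod p) (hd0 : d ≠ 0) (hdh : d ≠ ((p / 2 : ℕ) : ZMod p)) :
    w d = if ZMod.castHom hp (ZMod 2) d = 1 then x else y := by
  have hodd : ∀ i : ℕ, 1 ≤ i → i < p / 2 → w i = if Odd i then x else y := by
    intro i hi1 hi2
    split_ifs with hi
    · exact hwx i hi1 hi2 hi
    · exact hwy i hi1 hi2 (Nat.not_odd_iff_even.mp hi)
  obtain ⟨n, hn, rfl⟩ : ∃ n < p, (n : ZMod p) = d :=
    ⟨d.val, d.val_lt, ZMod.natCast_zmod_val d⟩
  have hn0 : n ≠ 0 := by rintro rfl; exact hd0 Nat.cast_zero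
  have hnh : n ≠ p / 2 := by rintro rfl; exact hdh rfl
  simp only [map_natCast, ZMod.natCast_eq_one_iff_odd]
  rcases lt_or_gt_of_ne hnh with hlt | hgt
  · exact hodd n (by omega) hlt
  · have hsym := hwsym (p - n) (by omega) (by omega)
    rw [Nat.sub_sub_self hn.le] at hsym
    have hpar : Odd (p - n) ↔ Odd n := by simp only [Nat.odd_iff]; omega
    rw [hsym, hodd (p - n) (by omega) (by omega)]
    simp only [hpar]

theorem type7_constant2Labelling_general
    (p : ℕ) [NeZero p] (hp4 : p % 4 = 2)
    (w : ZMod p → ℝ) (z x y t : ℝ) (hxy : x ≠ y) (hxt : x ≠ t)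
    (hw0 : w 0 = z) (hwt : w ((p / 2 : ℕ) : ZMod p) = t)
    (hwx : ∀ i : ℕ, 1 ≤ i → i < p / 2 → Odd i → w (i : ZMod p) = x)
    (hwy : ∀ i : ℕ, 1 ≤ i → i < p / 2 → Even i → w (i : ZMod p) = y)
    (hwsym : ∀ i : ℕ, 1 ≤ i → i < p / 2 →
      w (((p - i : ℕ) : ZMod p)) = w (i : ZMod p))
    (φ : ZMod p → Bool) (hnontriv : ∃ i j : ZMod p, φ i ≠ φ j)
    (a b : ℝ)
    (hlab : ∀ k : ZMod p,
      (φ k = true → (∑ u : ZMod p, if φ (u + k) = true then w u else 0) = a) ∧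
      (φ k = false → (∑ u : ZMod p, if φ (u + k) = true then w u else 0) = b)) :
    ((∀ i : ZMod p, φ (i + 1) ≠ φ i) ∧
      a = (((p / 2 : ℕ) : ℝ) - 1) * y + z ∧
      b = (((p / 2 : ℕ) : ℝ) - 1) * x + t) ∨
    ((∀ i : ZMod p, φ (i + ((p / 2 : ℕ) : ZMod p)) = φ i) ∧
      ∃ α : ℕ, α ≤ p / 2 - 1 ∧
        a = (α : ℝ) * (x + y) + t + z ∧ b = ((α : ℝ) + 1) * (x + y)) := by
  have hp2 : 2 ∣ p := by omega
  set π : ZMod p →+ ZMod 2 := (ZMod.castHom hp2 (ZMod 2)).toAddMonoidHom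
  set h : ZMod p := ((p / 2 : ℕ) : ZMod p)
  have hπh : π h = 1 := by
    simp only [π, h, RingHom.toAddMonoidHom_eq_coe, AddMonoidHom.coe_coe, map_natCast,
      ZMod.natCast_eq_one_iff_odd, Nat.odd_iff]
    omega
  have hhh : h + h = 0 := by
    rw [← Nat.cast_add, show p / 2 + p / 2 = p by omega, ZMod.natCast_self]
  have hw : w = parityWeight π h x y z t :=
    eq_parityWeight π h hπh hw0 hwt (type7_weight_eq_of_ne hp2 hwx hwy hwsym)
  have hφ : IsConstantTwoLabelling (parityWeight π h x y z t) φ a b := by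
    intro k
    rw [← hw]
    cases hk : φ k
    · exact (hlab k).2 hk
    · exact (hlab k).1 hk
  rcases hφ.periodic_or_antiperiodic hxt hπh hhh with hper | hanti
  · obtain ⟨α, hα, ha, hb⟩ := hφ.values_of_periodic hxy hπh hper hnontriv
    rw [ZMod.card] at hα
    exact Or.inr ⟨hper, α, by omega, ha, hb⟩
  · have hconst := hφ.parity_const_of_antiperiodic hxy hπh hhh (by rw [ZMod.card]; omega) hanti
    obtain ⟨ha, hb⟩ := hφ.values_of_antiperiodic hπh hhh hanti hconst
    rw [ZMod.card] at ha hb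
    have hπ1 : π 1 = 1 := map_one (ZMod.castHom hp2 (ZMod 2))
    exact Or.inl ⟨shift_ne_of_antiperiodic π hπh hπ1 hanti hconst, ha, hb⟩

/-- Non-trivial constant 2-labellings of Type 7 cycles
(`z (xy)^((p-2)/4) t (yx)^((p-2)/4)`): either `φ` is alternate with
`a = (p/2-1)y + z` and `b = (p/2-1)x + t`, or `φ` is `(p/2)`-periodic with
`a = α(x+y) + t + z` and `b = (α+1)(x+y)` for some `0 ≤ α ≤ p/2 - 1`. -/
theorem type7_constant2Labelling
    (p : ℕ) [NeZero p] (hp : 6 ≤ p) (hp4 : p % 4 = 2)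
    (w : ZMod p → ℝ) (z x y t : ℝ) (hxy : x ≠ y) (hxt : x ≠ t)
    (hw0 : w 0 = z) (hwt : w ((p / 2 : ℕ) : ZMod p) = t)
    (hwx : ∀ i : ℕ, 1 ≤ i → i < p / 2 → Odd i → w (i : ZMod p) = x)
    (hwy : ∀ i : ℕ, 1 ≤ i → i < p / 2 → Even i → w (i : ZMod p) = y)
    (hwsym : ∀ i : ℕ, 1 ≤ i → i < p / 2 →
      w (((p - i : ℕ) : ZMod p)) = w (i : ZMod p))
    (φ : ZMod p → Bool) (hnontriv : ∃ i j : ZMod p, φ i ≠ φ j)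
    (a b : ℝ)
    (hlab : ∀ k : ZMod p,
      (φ k = true → (∑ u : ZMod p, if φ (u + k) = true then w u else 0) = a) ∧
      (φ k = false → (∑ u : ZMod p, if φ (u + k) = true then w u else 0) = b)) :
    ((∀ i : ZMod p, φ (i + 1) ≠ φ i) ∧
      a = (((p / 2 : ℕ) : ℝ) - 1) * y + z ∧
      b = (((p / 2 : ℕ) : ℝ) - 1) * x + t) ∨
    ((∀ i : ZMod p, φ (i + ((p / 2 : ℕ) : ZMod p)) = φ i) ∧
      ∃ α : ℕ, α ≤ p / 2 - 1 ∧
        a = (α : ℝ) * (x + y) + t + z ∧ b = ((α : ℝ) + 1) * (x + y)) :=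
  type7_constant2Labelling_general p hp4 w z x y t hxy hxt hw0 hwt hwx hwy hwsym φ hnontriv a b hlab
end

section
/- Every alternate (1-antiperiodic) coloring φ of a Type 8 cycle is a constant 2-labelling with constants a = (p/2−2)y + z + t and b = (p/2)x. -/
/-!
An alternate coloring is determined by its value at `k`: `φ (i + k)` agrees with `φ k` exactly
when `i` is even, which is consistent around the cycle because `p` is even. So `S_φ(k)` is the
total weight of the even vertices when `k` is black and of the odd vertices when `k` is white.
Since `p/2` is even and the Type 8 weights are symmetric under `i ↦ p - i`, which preserves
parity, the odd vertices all carry `x`, and the even ones carry `y` except `0` and `p/2`.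
-/
open Finset

theorem apply_add_natCast_of_alternating {G : Type*} [AddMonoidWithOne G] {φ : G → Bool}
    (halt : ∀ i, φ (i + 1) ≠ φ i) (k : G) (n : ℕ) :
    φ (k + n) = if Even n then φ k else !φ k := by
  induction n with
  | zero => simp
  | succ n ih =>
    have hstep : φ (k + n + 1) = !φ (k + n) := by
      simpa [Bool.eq_not_iff] using halt (k + n)
    rw [Nat.cast_succ, ← add_assoc, hstep, ih]
    by_cases hn : Even n <;> simp [hn, Nat.even_add_one]

theorem ZMod.sum_eq_sum_range {M : Type*} [AddCommMonoid M] (p : ℕ) [NeZero p]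
    (f : ZMod p → M) : ∑ u, f u = ∑ i ∈ range p, f i := by
  refine sum_nbij' ZMod.val Nat.cast (fun u _ => by simpa using u.val_lt) (fun _ _ => mem_univ _)
    (fun u _ => ZMod.natCast_zmod_val u) (fun i hi => ZMod.val_cast_of_lt (mem_range.mp hi))
    (fun u _ => by rw [ZMod.natCast_zmod_val])

theorem Finset.sum_range_two_mul {M : Type*} [AddCommMonoid M] (g : ℕ → M) (m : ℕ) :
    ∑ i ∈ range (2 * m), g i = ∑ j ∈ range m, (g (2 * j) + g (2 * j + 1)) := by
  induction m with
  | zero => simp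
  | succ m ih =>
    rw [Nat.mul_succ, sum_range_succ, sum_range_succ, sum_range_succ _ m, ih, add_assoc]

section Type8

variable {p : ℕ} {w : ZMod p → ℝ} {z x y t : ℝ}
  (hwx : ∀ i : ℕ, 1 ≤ i → i < p / 2 → Odd i → w (i : ZMod p) = x)
  (hwy : ∀ i : ℕ, 1 ≤ i → i < p / 2 → Even i → w (i : ZMod p) = y)
  (hwsym : ∀ i : ℕ, 1 ≤ i → i < p / 2 → w (((p - i : ℕ) : ZMod p)) = w (i : ZMod p))
include hwx hwy hwsym

theorem type8_weight_eq (hp : Even p) {i : ℕ} (hi0 : 0 < i) (hip : i < p)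
    (hhalf : i ≠ p / 2) : w i = if Even i then y else x := by
  have hlow : ∀ j : ℕ, 1 ≤ j → j < p / 2 → w j = if Even j then y else x := by
    intro j h1 h2
    split_ifs with he
    exacts [hwy j h1 h2 he, hwx j h1 h2 (Nat.not_even_iff_odd.mp he)]
  rcases lt_or_gt_of_ne hhalf with hlt | hgt
  · exact hlow i hi0 hlt
  -- reflect `i` to `p - i`, which has the same parity because `p` is even
  have hpar : Even (p - i) ↔ Even i := by
    rw [Nat.even_sub hip.le, iff_true_left hp]
  have hp2 := Nat.even_iff.mp hp
  calc w i = w ((p - (p - i) : ℕ)) := by rw [Nat.sub_sub_self hip.le]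
    _ = w ((p - i : ℕ)) := hwsym _ (by omega) (by omega)
    _ = _ := by rw [hlow _ (by omega) (by omega), if_congr hpar rfl rfl]

variable (hp4 : p % 4 = 0)
include hp4

theorem type8_sum_even_weights [NeZero p] (hw0 : w 0 = z) (hwt : w ((p / 2 : ℕ) : ZMod p) = t) :
    ∑ i ∈ range p, (if Even i then w i else 0) = (((p / 2 : ℕ) : ℝ) - 2) * y + z + t := by
  have hp0 : p ≠ 0 := NeZero.ne p
  have hp : Even p := Nat.even_iff.mpr (by omega)
  have hterm : ∀ j ∈ range (p / 2),
      ((if Even (2 * j) then w ((2 * j : ℕ) : ZMod p) else 0) +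
        (if Even (2 * j + 1) then w ((2 * j + 1 : ℕ) : ZMod p) else 0)) =
      y + (if j = 0 then z - y else 0) + (if j = p / 4 then t - y else 0) := by
    intro j hj
    rw [mem_range] at hj
    rw [if_pos (even_two_mul j), if_neg (Nat.not_even_iff_odd.mpr (odd_two_mul_add_one j)),
      add_zero]
    by_cases h0 : j = 0
    · rw [if_pos h0, if_neg (by omega), h0, mul_zero, Nat.cast_zero, hw0]
      ring
    by_cases hq : j = p / 4
    · rw [if_neg h0, if_pos hq, show 2 * j = p / 2 by omega, hwt]
      ring
    rw [if_neg h0, if_neg hq, type8_weight_eq hwx hwy hwsym hp (by omega) (by omega) (by omega),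
      if_pos (even_two_mul j)]
    ring
  rw [show range p = range (2 * (p / 2)) by congr 1; omega, sum_range_two_mul, sum_congr rfl hterm,
    sum_add_distrib, sum_add_distrib, sum_const, card_range, sum_ite_eq', sum_ite_eq',
    if_pos (mem_range.mpr (by omega)), if_pos (mem_range.mpr (by omega)), nsmul_eq_mul]
  ring

theorem type8_sum_odd_weights :
    ∑ i ∈ range p, (if Odd i then w i else 0) = ((p / 2 : ℕ) : ℝ) * x := by
  have hp : Even p := Nat.even_iff.mpr (by omega)
  have hterm : ∀ j ∈ range (p / 2),
      ((if Odd (2 * j) then w ((2 * j : ℕ) : ZMod p) else 0) +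
        (if Odd (2 * j + 1) then w ((2 * j + 1 : ℕ) : ZMod p) else 0)) = x := by
    intro j hj
    rw [mem_range] at hj
    rw [if_neg (Nat.not_odd_iff_even.mpr (even_two_mul j)), if_pos (odd_two_mul_add_one j),
      zero_add, type8_weight_eq hwx hwy hwsym hp (by omega) (by omega) (by omega),
      if_neg (Nat.not_even_iff_odd.mpr (odd_two_mul_add_one j))]
  rw [show range p = range (2 * (p / 2)) by congr 1; omega, sum_range_two_mul, sum_congr rfl hterm,
    sum_const, card_range, nsmul_eq_mul]

end Type8

theorem type8_alternate_constant2Labelling_general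
    (p : ℕ) [NeZero p] (hp4 : p % 4 = 0)
    (w : ZMod p → ℝ) (z x y t : ℝ)
    (hw0 : w 0 = z) (hwt : w ((p / 2 : ℕ) : ZMod p) = t)
    (hwx : ∀ i : ℕ, 1 ≤ i → i < p / 2 → Odd i → w (i : ZMod p) = x)
    (hwy : ∀ i : ℕ, 1 ≤ i → i < p / 2 → Even i → w (i : ZMod p) = y)
    (hwsym : ∀ i : ℕ, 1 ≤ i → i < p / 2 →
      w (((p - i : ℕ) : ZMod p)) = w (i : ZMod p))
    (φ : ZMod p → Bool) (halt : ∀ i : ZMod p, φ (i + 1) ≠ φ i) :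
    ∀ k : ZMod p,
      (φ k = true → (∑ u : ZMod p, if φ (u + k) = true then w u else 0) =
        (((p / 2 : ℕ) : ℝ) - 2) * y + z + t) ∧
      (φ k = false → (∑ u : ZMod p, if φ (u + k) = true then w u else 0) =
        ((p / 2 : ℕ) : ℝ) * x) := by
  intro k
  have hshift (i : ℕ) : φ (i + k) = if Even i then φ k else !φ k := by
    rw [add_comm]
    exact apply_add_natCast_of_alternating halt k i
  simp only [ZMod.sum_eq_sum_range, hshift]
  refine ⟨fun hk => ?_, fun hk => ?_⟩
  · simpa [hk] using type8_sum_even_weights hwx hwy hwsym hp4 hw0 hwt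
  · simpa [hk] using type8_sum_odd_weights hwx hwy hwsym hp4

/-- Every alternate coloring of a Type 8 cycle
(`z (xy)^((p-4)/4) x t x (yx)^((p-4)/4)`) is a constant 2-labelling with
constants `a = (p/2-2)y + z + t` and `b = (p/2)x`. -/
theorem type8_alternate_constant2Labelling
    (p : ℕ) [NeZero p] (hp : 8 ≤ p) (hp4 : p % 4 = 0)
    (w : ZMod p → ℝ) (z x y t : ℝ) (hxy : x ≠ y) (hyt : y ≠ t)
    (hw0 : w 0 = z) (hwt : w ((p / 2 : ℕ) : ZMod p) = t)
    (hwx : ∀ i : ℕ, 1 ≤ i → i < p / 2 → Odd i → w (i : ZMod p) = x)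
    (hwy : ∀ i : ℕ, 1 ≤ i → i < p / 2 → Even i → w (i : ZMod p) = y)
    (hwsym : ∀ i : ℕ, 1 ≤ i → i < p / 2 →
      w (((p - i : ℕ) : ZMod p)) = w (i : ZMod p))
    (φ : ZMod p → Bool) (halt : ∀ i : ZMod p, φ (i + 1) ≠ φ i) :
    ∀ k : ZMod p,
      (φ k = true → (∑ u : ZMod p, if φ (u + k) = true then w u else 0) =
        (((p / 2 : ℕ) : ℝ) - 2) * y + z + t) ∧
      (φ k = false → (∑ u : ZMod p, if φ (u + k) = true then w u else 0) =
        ((p / 2 : ℕ) : ℝ) * x) :=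
  type8_alternate_constant2Labelling_general p hp4 w z x y t hw0 hwt hwx hwy hwsym φ halt
end
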